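/- Let X₁,…,X_d be real random variables with X_i ~ F_i, and let G_i be the distribution function of |X_i|. Then E(X₁X₂⋯X_d) ≤ E(∏_{i=1}^d G_i⁻¹(U)) where U is uniform on [0,1]. -/

import Mathlib

/-!
Bound `∏ Xᵢ` by `∏ |Xᵢ|`. Writing a product `∏ yᵢ⁺` as the Lebesgue measure of the box
`∏ (0, yᵢ)`, Fubini turns `E ∏ |Xᵢ|` into the integral over the positive orthant of
`t ↦ P(|Xᵢ| > tᵢ for all i)`, and `∫₀¹ ∏ Gᵢ⁻¹(u) du` into the integral of
`t ↦ Leb {u ∈ (0,1) | u > Gᵢ(tᵢ) for all i}`, because `x < Gᵢ⁻¹(u) ↔ Gᵢ(x) < u`.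
Pointwise in `t` the first integrand is at most `minᵢ (1 - Gᵢ(tᵢ))` (the Fréchet–Hoeffding
upper bound), which is the second.
-/

open MeasureTheory Set

/-- Generalized inverse (quantile function). -/
noncomputable def quantile (ν : Measure ℝ) (u : ℝ) : ℝ :=
  sInf {x : ℝ | u ≤ (ν (Iic x)).toReal}

open Filter ProbabilityTheory

section Quantile

variable (ν : Measure ℝ) [IsProbabilityMeasure ν] {u : ℝ}

lemma quantile_eq_sInf_cdf (u : ℝ) : quantile ν u = sInf {x | u ≤ cdf ν x} := by
  simp only [quantile, cdf_eq_real, measureReal_def]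

lemma lt_quantile_iff (hu : u ∈ Ioo (0 : ℝ) 1) (x : ℝ) : x < quantile ν u ↔ cdf ν x < u := by
  rw [quantile_eq_sInf_cdf]
  set S := {x | u ≤ cdf ν x}
  have hne : S.Nonempty := ((tendsto_cdf_atTop ν).eventually (eventually_ge_nhds hu.2)).exists
  have hbdd : BddBelow S := by
    obtain ⟨x₀, hx₀⟩ := eventually_atBot.mp
      ((tendsto_cdf_atBot ν).eventually (eventually_lt_nhds hu.1))
    exact ⟨x₀, fun x hx => le_of_not_gt fun hlt => (hx₀ x hlt.le).not_ge hx⟩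
  have hmono : ∀ ⦃x y⦄, x ∈ S → x ≤ y → y ∈ S := fun x y hx hxy => hx.trans (monotone_cdf ν hxy)
  -- right-continuity of the cdf puts the infimum in `S`
  have hmem : sInf S ∈ S := by
    refine ge_of_tendsto (((cdf ν).right_continuous _).mono Ioi_subset_Ici_self) ?_
    filter_upwards [self_mem_nhdsWithin] with y hy
    obtain ⟨x, hxS, hxy⟩ := (csInf_lt_iff hbdd hne).mp hy
    exact hmono hxS hxy.le
  rw [← not_le, ← not_le]
  exact not_congr ⟨fun h => hmono hmem h, fun h => csInf_le hbdd h⟩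

lemma quantile_nonneg (h : ν (Iio 0) = 0) (hu : u ∈ Ioo (0 : ℝ) 1) : 0 ≤ quantile ν u := by
  refine le_of_forall_lt fun x hx => (lt_quantile_iff ν hu x).mpr ?_
  have : cdf ν x = 0 := by
    rw [cdf_eq_real, measureReal_def, measure_mono_null (Iic_subset_Iio.mpr hx) h,
      ENNReal.toReal_zero]
  exact this ▸ hu.1

end Quantile

lemma quantile_map_abs_nonneg {Ω : Type*} [MeasurableSpace Ω] (μ : Measure Ω)
    [IsProbabilityMeasure μ] {Z : Ω → ℝ} (hZ : Measurable Z) {u : ℝ} (hu : u ∈ Ioo (0 : ℝ) 1) :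
    0 ≤ quantile (μ.map fun ω => |Z ω|) u := by
  have := Measure.isProbabilityMeasure_map (μ := μ) hZ.abs.aemeasurable
  refine quantile_nonneg _ ?_ hu
  rw [Measure.map_apply hZ.abs measurableSet_Iio]
  exact measure_mono_null (fun ω (h : |Z ω| < 0) => (abs_nonneg _).not_gt h) measure_empty

lemma prod_pi_volume_Ioi_apply {α ι : Type*} [MeasurableSpace α] [Fintype ι] (m : Measure α)
    {E : Set (α × (ι → ℝ))} (hE : MeasurableSet E) (f : ι → α → ℝ)
    (hsec : ∀ᵐ a ∂m, Prod.mk a ⁻¹' E = univ.pi fun i => Iio (f i a)) :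
    (m.prod (Measure.pi fun _ => volume.restrict (Ioi 0))) E
      = ∫⁻ a, ∏ i, ENNReal.ofReal (f i a) ∂m := by
  rw [Measure.prod_apply hE]
  refine lintegral_congr_ae ?_
  filter_upwards [hsec] with a ha
  rw [ha, Measure.pi_pi]
  refine Finset.prod_congr rfl fun i _ => ?_
  rw [Measure.restrict_apply measurableSet_Iio, Iio_inter_Ioi, Real.volume_Ioo, sub_zero]

section Comonotone

variable {Ω ι : Type*} [MeasurableSpace Ω] [Fintype ι] (μ : Measure Ω) [IsProbabilityMeasure μ]
  {Y : ι → Ω → ℝ}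

lemma measure_forall_lt_le_volume_forall_cdf_lt (hY : ∀ i, Measurable (Y i)) (t : ι → ℝ) :
    μ {ω | ∀ i, t i < Y i ω}
      ≤ volume.restrict (Ioo 0 1) {u | ∀ i, cdf (μ.map (Y i)) (t i) < u} := by
  have (i : ι) : IsProbabilityMeasure (μ.map (Y i)) :=
    Measure.isProbabilityMeasure_map (hY i).aemeasurable
  rw [Measure.restrict_apply' measurableSet_Ioo]
  rcases isEmpty_or_nonempty ι with hι | hι
  · simp
  obtain ⟨j, hj⟩ := Finite.exists_max fun i => cdf (μ.map (Y i)) (t i)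
  calc μ {ω | ∀ i, t i < Y i ω}
      ≤ μ (Y j ⁻¹' Ioi (t j)) := measure_mono fun ω h => h j
    _ = 1 - ENNReal.ofReal (cdf (μ.map (Y j)) (t j)) := by
        rw [← Measure.map_apply (hY j) measurableSet_Ioi, ← compl_Iic,
          prob_compl_eq_one_sub measurableSet_Iic, ofReal_cdf]
    _ = volume (Ioo (cdf (μ.map (Y j)) (t j)) 1) := by
        rw [Real.volume_Ioo, ENNReal.ofReal_sub _ (cdf_nonneg _ _), ENNReal.ofReal_one]
    _ ≤ _ := by
        refine measure_mono fun u hu => ⟨fun i => (hj i).trans_lt hu.1, ?_, hu.2⟩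
        exact (cdf_nonneg _ _).trans_lt hu.1

theorem lintegral_prod_ofReal_le_lintegral_prod_quantile (hY : ∀ i, Measurable (Y i)) :
    ∫⁻ ω, ∏ i, ENNReal.ofReal (Y i ω) ∂μ
      ≤ ∫⁻ u in Ioo 0 1, ∏ i, ENNReal.ofReal (quantile (μ.map (Y i)) u) := by
  have (i : ι) : IsProbabilityMeasure (μ.map (Y i)) :=
    Measure.isProbabilityMeasure_map (hY i).aemeasurable
  have hE : MeasurableSet {p : Ω × (ι → ℝ) | ∀ i, p.2 i < Y i p.1} := by
    simp only [ofPred_forall]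
    exact .iInter fun i => measurableSet_lt (by fun_prop) ((hY i).comp measurable_fst)
  have hE' : MeasurableSet {p : ℝ × (ι → ℝ) | ∀ i, cdf (μ.map (Y i)) (p.2 i) < p.1} := by
    simp only [ofPred_forall]
    exact .iInter fun i =>
      measurableSet_lt ((monotone_cdf _).measurable.comp (by fun_prop)) measurable_fst
  rw [← prod_pi_volume_Ioi_apply μ hE _ (ae_of_all _ fun ω => by ext; simp),
    ← prod_pi_volume_Ioi_apply _ hE' _ ?sections,
    Measure.prod_apply_symm hE, Measure.prod_apply_symm hE']
  · exact lintegral_mono fun t => measure_forall_lt_le_volume_forall_cdf_lt μ hY t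
  · filter_upwards [ae_restrict_mem measurableSet_Ioo] with u hu
    ext t
    simp [lt_quantile_iff _ hu]

end Comonotone

theorem stmt_2_general {Ω : Type*} [MeasurableSpace Ω] (μ : Measure Ω) [IsProbabilityMeasure μ]
    (d : ℕ) (X : Fin d → Ω → ℝ) (hm : ∀ i, Measurable (X i))
    (hIntQ : IntegrableOn
      (fun u => ∏ i, quantile (μ.map (fun ω => |X i ω|)) u) (Icc (0:ℝ) 1) volume) :
    ∫ ω, ∏ i, X i ω ∂μ
      ≤ ∫ u in Icc (0:ℝ) 1, ∏ i, quantile (μ.map (fun ω => |X i ω|)) u := by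
  have hprod_nonneg (u : ℝ) (hu : u ∈ Ioo (0 : ℝ) 1) :
      0 ≤ ∏ i, quantile (μ.map (fun ω => |X i ω|)) u :=
    Finset.prod_nonneg fun i _ => quantile_map_abs_nonneg μ (hm i) hu
  rw [integral_Icc_eq_integral_Ioo,
    ← ENNReal.ofReal_le_ofReal_iff (setIntegral_nonneg measurableSet_Ioo hprod_nonneg),
    ofReal_integral_eq_lintegral_ofReal (hIntQ.mono_set Ioo_subset_Icc_self)
      ((ae_restrict_iff' measurableSet_Ioo).mpr (ae_of_all _ hprod_nonneg))]
  calc ENNReal.ofReal (∫ ω, ∏ i, X i ω ∂μ)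
      ≤ ‖∫ ω, ∏ i, X i ω ∂μ‖ₑ := Real.ofReal_le_enorm _
    _ ≤ ∫⁻ ω, ‖∏ i, X i ω‖ₑ ∂μ := enorm_integral_le_lintegral_enorm _
    _ = ∫⁻ ω, ∏ i, ENNReal.ofReal |X i ω| ∂μ := lintegral_congr fun ω => by
        rw [Real.enorm_eq_ofReal_abs, Finset.abs_prod,
          ENNReal.ofReal_prod_of_nonneg fun i _ => abs_nonneg _]
    _ ≤ ∫⁻ u in Ioo 0 1, ∏ i, ENNReal.ofReal (quantile (μ.map (fun ω => |X i ω|)) u) :=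
        lintegral_prod_ofReal_le_lintegral_prod_quantile μ fun i => (hm i).abs
    _ = ∫⁻ u in Ioo 0 1, ENNReal.ofReal (∏ i, quantile (μ.map (fun ω => |X i ω|)) u) :=
        setLIntegral_congr_fun measurableSet_Ioo fun u hu =>
          (ENNReal.ofReal_prod_of_nonneg fun i _ => quantile_map_abs_nonneg μ (hm i) hu).symm

/-- `E(X₁⋯X_d) ≤ E(∏ G_i⁻¹(U))` where `G_i` is the distribution function of `|X_i|`. -/
theorem stmt_2 {Ω : Type*} [MeasurableSpace Ω] (μ : Measure Ω) [IsProbabilityMeasure μ]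
    (d : ℕ) (X : Fin d → Ω → ℝ) (hm : ∀ i, Measurable (X i))
    (hInt : Integrable (fun ω => ∏ i, X i ω) μ)
    (hIntQ : IntegrableOn
      (fun u => ∏ i, quantile (μ.map (fun ω => |X i ω|)) u) (Icc (0:ℝ) 1) volume) :
    ∫ ω, ∏ i, X i ω ∂μ
      ≤ ∫ u in Icc (0:ℝ) 1, ∏ i, quantile (μ.map (fun ω => |X i ω|)) u :=
  stmt_2_general μ d X hm hIntQ
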